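/- arXiv:2102.00829 — 3 statements merged into one kernel-verified Lean document; each statement's English description precedes it below -/
import Mathlib

section
/- Let G be a finite group and A a commutative unital ring whose additive group is torsion-free (i.e. for every nonzero natural number n and a ∈ A, n·a = 0 implies a = 0). Then every derivation of A[G] is inner. -/
open MonoidAlgebra

/-- `d` is a derivation of the group ring `A[G]`: an `A`-linear endomorphism
satisfying the Leibniz rule. -/
def IsGroupRingDerivation {A G : Type} [CommRing A] [Group G]
    (d : MonoidAlgebra A G →ₗ[A] MonoidAlgebra A G) : Prop :=
  ∀ x y : MonoidAlgebra A G, d (x * y) = d x * y + x * d y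

/-- `d` is an inner derivation of `A[G]`: `d x = a*x - x*a` for some `a ∈ A[G]`. -/
def IsInnerDerivation {A G : Type} [CommRing A] [Group G]
    (d : MonoidAlgebra A G →ₗ[A] MonoidAlgebra A G) : Prop :=
  ∃ a : MonoidAlgebra A G, ∀ x : MonoidAlgebra A G, d x = a * x - x * a

/-- `d` is weakly inner: the coefficient of `h` in `d ĝ` vanishes whenever `g` and `h`
commute (the character of `d` is trivial on loops). -/
def IsWeaklyInnerDerivation {A G : Type} [CommRing A] [Group G]
    (d : MonoidAlgebra A G →ₗ[A] MonoidAlgebra A G) : Prop :=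
  ∀ g h : G, g * h = h * g → (d (MonoidAlgebra.of A G g)).coeff h = 0

/-!
A derivation `d` gives the map `g ↦ d(g) g⁻¹`, a 1-cocycle of `G` with values in `A[G]`
under conjugation, and `d` is inner exactly when this cocycle is a coboundary. As a
`G`-module, `A[G]` splits along conjugacy classes. Writing `c g u` for the coefficient of
`u` in `d(g) g⁻¹`, the map `g ↦ c g r` restricted to the centralizer of `r` is a
homomorphism into `A`, hence zero when `G` is finite and `A` is torsion-free. Then
`c m r` depends only on `m⁻¹ r m`, and choosing a representative `r` of each class,
`a (m⁻¹ r m) = - c m r` gives the coboundary.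
-/

/-- The cocycle condition for `g ↦ c g` under the action `(g • f) u = f (g⁻¹ u g)` of `G`
on `G → A`. -/
def IsConjCocycle {G A : Type*} [Group G] [AddCommGroup A] (c : G → G → A) : Prop :=
  ∀ g₁ g₂ u : G, c (g₁ * g₂) u = c g₁ u + c g₂ (g₁⁻¹ * u * g₁)

namespace IsConjCocycle

variable {G A : Type*} [Group G] [AddCommGroup A] {c : G → G → A}

theorem apply_one (hc : IsConjCocycle c) (u : G) : c 1 u = 0 := by
  simpa using hc 1 1 u

theorem apply_pow_of_commute (hc : IsConjCocycle c) {g u : G} (hgu : Commute g u) (n : ℕ) :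
    c (g ^ n) u = n • c g u := by
  induction n with
  | zero => simp [hc.apply_one]
  | succ n ih =>
    have hfix : (g ^ n)⁻¹ * u * g ^ n = u := by
      rw [mul_assoc, ((hgu.pow_left n).eq).symm, inv_mul_cancel_left]
    rw [pow_succ, hc, ih, hfix, succ_nsmul]

theorem apply_eq_zero_of_commute [IsAddTorsionFree A] (hc : IsConjCocycle c) {g u : G}
    (hg : IsOfFinOrder g) (hgu : Commute g u) : c g u = 0 := by
  have h : orderOf g • c g u = 0 := by
    rw [← hc.apply_pow_of_commute hgu, pow_orderOf_eq_one, hc.apply_one]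
  exact (nsmul_eq_zero_iff_right hg.orderOf_pos.ne').mp h

theorem apply_eq_of_conj_eq (hc : IsConjCocycle c)
    (hcomm : ∀ g u : G, Commute g u → c g u = 0) {m m' r : G}
    (h : m⁻¹ * r * m = m'⁻¹ * r * m') : c m r = c m' r := by
  obtain ⟨z, rfl⟩ : ∃ z, m' = z * m := ⟨m' * m⁻¹, by group⟩
  have hz : z⁻¹ * r * z = r := by
    calc z⁻¹ * r * z = m * ((z * m)⁻¹ * r * (z * m)) * m⁻¹ := by group
      _ = r := by rw [← h]; group
  have hzr : Commute z r := by
    calc z * r = z * (z⁻¹ * r * z) := by rw [hz]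
      _ = r * z := by group
  calc c m r = c z r + c m (z⁻¹ * r * z) := by rw [hcomm z r hzr, hz, zero_add]
    _ = c (z * m) r := (hc z m r).symm

theorem exists_eq_sub (hc : IsConjCocycle c) (hcomm : ∀ g u : G, Commute g u → c g u = 0) :
    ∃ a : G → A, ∀ g u : G, c g u = a u - a (g⁻¹ * u * g) := by
  let r (u : G) : G := (ConjClasses.mk u).out
  have hr_conj (g u : G) : r (g⁻¹ * u * g) = r u :=
    congrArg Quotient.out
      (ConjClasses.mk_eq_mk_iff_isConj.mpr (isConj_iff.mpr ⟨g⁻¹, by group⟩)).symm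
  have hr_isConj (u : G) : ∃ m : G, m⁻¹ * r u * m = u := by
    obtain ⟨k, hk⟩ :=
      isConj_iff.mp (ConjClasses.mk_eq_mk_iff_isConj.mp (Quotient.out_eq (ConjClasses.mk u)))
    exact ⟨k⁻¹, by simpa using hk⟩
  choose m hm using hr_isConj
  refine ⟨fun u => - c (m u) (r u), fun g u => ?_⟩
  have hmg : c (m u * g) (r u) = c (m (g⁻¹ * u * g)) (r u) := by
    refine hc.apply_eq_of_conj_eq hcomm ?_
    calc (m u * g)⁻¹ * r u * (m u * g) = g⁻¹ * ((m u)⁻¹ * r u * m u) * g := by group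
      _ = g⁻¹ * u * g := by rw [hm]
      _ = _ := by rw [← hr_conj g u, hm]
  have := hc (m u) g (r u)
  rw [hm, hmg, ← hr_conj g u] at this
  dsimp only
  rw [this, hr_conj]
  abel

end IsConjCocycle

section GroupRing

variable {A G : Type} [CommRing A] [Group G]

noncomputable def derivCocycle (d : MonoidAlgebra A G →ₗ[A] MonoidAlgebra A G) (g u : G) : A :=
  (d (of A G g)).coeff (u * g)

theorem isConjCocycle_derivCocycle {d : MonoidAlgebra A G →ₗ[A] MonoidAlgebra A G}
    (hd : IsGroupRingDerivation d) : IsConjCocycle (derivCocycle d) := by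
  intro g₁ g₂ u
  have h := congrArg (fun x => x.coeff (u * g₁ * g₂)) (hd (of A G g₁) (of A G g₂))
  simp only [of_apply, single_mul_single, mul_one, coeff_add,
    Finsupp.add_apply, coeff_mul_single_apply, coeff_single_mul_apply, one_mul] at h
  simpa [derivCocycle, mul_assoc] using h

theorem isInnerDerivation_of_coeff_of {d : MonoidAlgebra A G →ₗ[A] MonoidAlgebra A G}
    (a : MonoidAlgebra A G)
    (ha : ∀ g h : G, (d (of A G g)).coeff h = a.coeff (h * g⁻¹) - a.coeff (g⁻¹ * h)) :
    IsInnerDerivation d := by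
  refine ⟨a, fun x => ?_⟩
  induction x using MonoidAlgebra.induction_on with
  | of g =>
    ext h
    simp only [of_apply, coeff_sub, Finsupp.sub_apply, coeff_mul_single_apply,
      coeff_single_mul_apply, mul_one, one_mul]
    exact ha g h
  | add x y hx hy => rw [map_add, hx, hy, mul_add, add_mul]; abel
  | smul r x hx => rw [map_smul, hx, smul_sub, mul_smul_comm, smul_mul_assoc]

end GroupRing

/-- If the additive group of `A` is torsion-free and `G` is a finite group, then every
derivation of `A[G]` is inner. -/
theorem all_derivations_inner_of_torsion_free
    (A G : Type) [CommRing A] [Group G] [Finite G]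
    (htf : ∀ n : ℕ, n ≠ 0 → ∀ a : A, n • a = 0 → a = 0) :
    ∀ d : MonoidAlgebra A G →ₗ[A] MonoidAlgebra A G,
      IsGroupRingDerivation d → IsInnerDerivation d := by
  intro d hd
  have : IsAddTorsionFree A :=
    ⟨fun n hn x y hxy => sub_eq_zero.mp (htf n hn _ (by rw [smul_sub, sub_eq_zero]; exact hxy))⟩
  have hc := isConjCocycle_derivCocycle hd
  obtain ⟨a, ha⟩ := hc.exists_eq_sub fun g u =>
    hc.apply_eq_zero_of_commute (isOfFinOrder_of_finite g)
  refine isInnerDerivation_of_coeff_of (ofCoeff (Finsupp.equivFunOnFinite.symm a))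
    fun g h => ?_
  simpa [derivCocycle, mul_assoc] using ha g (h * g⁻¹)
end

section
/- Let G be a finite group, m a positive integer, and A = ℤ/mℤ. If gcd(ord(g), m) = 1 for every g ∈ G, where ord(g) is the order of g in G, then every derivation of A[G] is inner. -/
open MonoidAlgebra

/-! Once `|G|` is invertible in `A`, a derivation `d` of `A[G]` is inner by averaging: the map
`c g = d(g) g⁻¹` is a 1-cocycle for the conjugation action of `G` on `A[G]`, so
`a = |G|⁻¹ ∑ₕ c h` satisfies `c g = a - g a g⁻¹`, i.e. `d(g) = a g - g a`. By Cauchy's theorem, `|G|`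
is coprime to `m`, hence a unit of `ℤ/mℤ`, when all element orders are. -/

theorem Nat.coprime_card_of_forall_coprime_orderOf {G : Type*} [Group G] [Finite G] {m : ℕ}
    (h : ∀ g : G, (orderOf g).Coprime m) : (Nat.card G).Coprime m :=
  Nat.coprime_of_dvd fun p hp hpG => by
    have : Fact p.Prime := ⟨hp⟩
    obtain ⟨g, rfl⟩ := exists_prime_orderOf_dvd_card' p hpG
    exact (Nat.Prime.coprime_iff_not_dvd hp).mp (h g)

section GroupRingDerivation

variable {A G : Type} [CommRing A] [Group G]

theorem isInnerDerivation_of_forall_of (d : MonoidAlgebra A G →ₗ[A] MonoidAlgebra A G)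
    (a : MonoidAlgebra A G) (h : ∀ g : G, d (of A G g) = a * of A G g - of A G g * a) :
    IsInnerDerivation d := by
  refine ⟨a, fun x => ?_⟩
  suffices d = LinearMap.mulLeft A a - LinearMap.mulRight A a from congr($this x)
  refine lhom_ext' fun g => LinearMap.ext_ring ?_
  simpa using h g

noncomputable def derivationCocycle (d : MonoidAlgebra A G →ₗ[A] MonoidAlgebra A G) (g : G) :
    MonoidAlgebra A G :=
  d (of A G g) * of A G g⁻¹

theorem MonoidAlgebra.of_mul_of_inv (g : G) : of A G g * of A G g⁻¹ = 1 := by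
  rw [← map_mul, mul_inv_cancel, map_one]

theorem MonoidAlgebra.of_inv_mul_of (g : G) : of A G g⁻¹ * of A G g = 1 := by
  rw [← map_mul, inv_mul_cancel, map_one]

namespace IsGroupRingDerivation

variable {d : MonoidAlgebra A G →ₗ[A] MonoidAlgebra A G}

theorem derivationCocycle_mul (hd : IsGroupRingDerivation d) (g h : G) :
    derivationCocycle d (g * h) =
      derivationCocycle d g + of A G g * derivationCocycle d h * of A G g⁻¹ := by
  unfold derivationCocycle
  calc d (of A G (g * h)) * of A G (g * h)⁻¹
      = (d (of A G g) * of A G h + of A G g * d (of A G h)) * (of A G h⁻¹ * of A G g⁻¹) := by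
        rw [mul_inv_rev, map_mul (of A G), map_mul (of A G), hd]
    _ = d (of A G g) * (of A G h * of A G h⁻¹) * of A G g⁻¹
          + of A G g * (d (of A G h) * of A G h⁻¹) * of A G g⁻¹ := by noncomm_ring
    _ = _ := by rw [of_mul_of_inv, mul_one]

theorem card_smul_derivationCocycle [Fintype G] (hd : IsGroupRingDerivation d) (g : G) :
    Fintype.card G • derivationCocycle d g =
      ∑ h, derivationCocycle d h - of A G g * (∑ h, derivationCocycle d h) * of A G g⁻¹ := by
  rw [eq_sub_iff_add_eq]
  calc Fintype.card G • derivationCocycle d g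
        + of A G g * (∑ h, derivationCocycle d h) * of A G g⁻¹
      = ∑ h, derivationCocycle d (g * h) := by
        simp only [hd.derivationCocycle_mul, Finset.sum_add_distrib, Finset.sum_const,
          Finset.card_univ, Finset.mul_sum, Finset.sum_mul]
    _ = ∑ h, derivationCocycle d h :=
        Fintype.sum_bijective _ (Group.mulLeft_bijective g) _ _ fun _ => rfl

theorem isInnerDerivation_of_isUnit_card [Fintype G] (hd : IsGroupRingDerivation d)
    (hG : IsUnit (Fintype.card G : A)) : IsInnerDerivation d := by
  obtain ⟨u, hu⟩ := hG
  set s := ∑ h, derivationCocycle d h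
  refine isInnerDerivation_of_forall_of d ((↑u⁻¹ : A) • s) fun g => ?_
  have hcoc :
      derivationCocycle d g = (↑u⁻¹ : A) • s - of A G g * ((↑u⁻¹ : A) • s) * of A G g⁻¹ := by
    rw [mul_smul_comm, smul_mul_assoc, ← smul_sub, ← hd.card_smul_derivationCocycle,
      ← Nat.cast_smul_eq_nsmul A, ← hu, smul_smul, Units.inv_mul, one_smul]
  calc d (of A G g) = derivationCocycle d g * of A G g := by
        rw [derivationCocycle, mul_assoc, of_inv_mul_of, mul_one]
    _ = _ := by rw [hcoc, sub_mul, mul_assoc _ (of A G g⁻¹), of_inv_mul_of, mul_one]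

end IsGroupRingDerivation

end GroupRingDerivation

theorem all_derivations_inner_of_coprime_orders_general
    (G : Type) [Group G] [Finite G] (m : ℕ)
    (hord : ∀ g : G, Nat.gcd (orderOf g) m = 1) :
    ∀ d : MonoidAlgebra (ZMod m) G →ₗ[ZMod m] MonoidAlgebra (ZMod m) G,
      IsGroupRingDerivation d → IsInnerDerivation d := by
  cases nonempty_fintype G
  intro d hd
  have hcard : (Fintype.card G).Coprime m :=
    Nat.card_eq_fintype_card (α := G) ▸ Nat.coprime_card_of_forall_coprime_orderOf hord
  exact hd.isInnerDerivation_of_isUnit_card ((ZMod.isUnit_iff_coprime _ _).mpr hcard)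

/-- If `G` is finite, `m > 0`, `A = ℤ/mℤ`, and every element of `G` has order coprime
to `m`, then every derivation of `A[G]` is inner. -/
theorem all_derivations_inner_of_coprime_orders
    (G : Type) [Group G] [Finite G] (m : ℕ) (hm : 0 < m)
    (hord : ∀ g : G, Nat.gcd (orderOf g) m = 1) :
    ∀ d : MonoidAlgebra (ZMod m) G →ₗ[ZMod m] MonoidAlgebra (ZMod m) G,
      IsGroupRingDerivation d → IsInnerDerivation d :=
  all_derivations_inner_of_coprime_orders_general G m hord
end

section
/- Let G be a group, A a commutative unital ring, and u ∈ G an element whose conjugacy class [u] is finite. Let d be a derivation of A[G] that is weakly inner (i.e. (d v̂)(h) = 0 whenever hv = vh) and whose character is supported on the conjugacy class [u], meaning (d v̂)(h) ≠ 0 implies v⁻¹h ∈ [u]. Then d is inner; moreover there exists a ∈ A[G] supported on [u] (i.e. a(x) = 0 for x ∉ [u]) with d(x) = ax − xa for all x ∈ A[G]. -/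
open MonoidAlgebra

/-!
The Leibniz rule makes the character `χ(v, h) = (d v̂)(h)` a cocycle for the conjugation action:
with `φ_t(v) = χ(v, v t)` (`conjCharacter d t v`) one has `φ_t(g h) = φ_{h t h⁻¹}(g) + φ_t(h)`.
Weak innerness kills `φ_u` on the centralizer of `u`, so `φ_u(s)` depends only on `s u s⁻¹` and
defines a function `α = classPotential d u` on `[u]` with `φ_t(v) = α(v t v⁻¹) - α(t)` for
`t ∈ [u]`. As `[u]` is finite, `α` is an element `a` of `A[G]`, and the formula says that `d` and
`x ↦ a x - x a` agree on the basis `Ĝ`.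
-/

namespace MonoidAlgebra

variable {A G : Type*}

lemma linearMap_ext_of {N : Type*} [CommSemiring A] [Monoid G] [AddCommMonoid N] [Module A N]
    {f f' : MonoidAlgebra A G →ₗ[A] N} (h : ∀ g, f (of A G g) = f' (of A G g)) : f = f' :=
  lhom_ext' fun g => LinearMap.ext_ring (h g)

lemma coeff_mul_of_sub_of_mul [CommRing A] [Group G] (a : MonoidAlgebra A G) (g h : G) :
    (a * of A G g - of A G g * a).coeff h = a.coeff (h * g⁻¹) - a.coeff (g⁻¹ * h) := by
  simp [of_apply, coeff_sub]

end MonoidAlgebra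

section Character

variable {A G : Type} [CommRing A] [Group G] {d : MonoidAlgebra A G →ₗ[A] MonoidAlgebra A G}

noncomputable def conjCharacter (d : MonoidAlgebra A G →ₗ[A] MonoidAlgebra A G) (t v : G) : A :=
  (d (of A G v)).coeff (v * t)

lemma IsGroupRingDerivation.coeff_of_mul (hd : IsGroupRingDerivation d) (g h x : G) :
    (d (of A G (g * h))).coeff x =
      (d (of A G g)).coeff (x * h⁻¹) + (d (of A G h)).coeff (g⁻¹ * x) := by
  rw [map_mul, hd, coeff_add, Finsupp.add_apply]
  simp [of_apply]

lemma IsGroupRingDerivation.conjCharacter_mul (hd : IsGroupRingDerivation d) (t g h : G) :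
    conjCharacter d t (g * h) = conjCharacter d (h * t * h⁻¹) g + conjCharacter d t h := by
  simp only [conjCharacter, hd.coeff_of_mul]
  congr 2 <;> group

lemma IsWeaklyInnerDerivation.conjCharacter_eq_zero (hwi : IsWeaklyInnerDerivation d) {t v : G}
    (hvt : Commute v t) : conjCharacter d t v = 0 :=
  hwi v (v * t) ((Commute.refl v).mul_right hvt).eq

lemma conjCharacter_eq_of_conj_eq (hd : IsGroupRingDerivation d) (hwi : IsWeaklyInnerDerivation d)
    {u v v' : G} (h : v * u * v⁻¹ = v' * u * v'⁻¹) :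
    conjCharacter d u v = conjCharacter d u v' := by
  have hc : (v'⁻¹ * v) * u * (v'⁻¹ * v)⁻¹ = u := by
    rw [show (v'⁻¹ * v) * u * (v'⁻¹ * v)⁻¹ = v'⁻¹ * (v * u * v⁻¹) * v' by group, h]; group
  rw [show v = v' * (v'⁻¹ * v) by group, hd.conjCharacter_mul, hc,
    hwi.conjCharacter_eq_zero (mul_inv_eq_iff_eq_mul.mp hc), add_zero]

open Classical in
noncomputable def classPotential (d : MonoidAlgebra A G →ₗ[A] MonoidAlgebra A G) (u w : G) : A :=
  if hw : IsConj u w then conjCharacter d u (isConj_iff.mp hw).choose else 0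

lemma classPotential_of_not_isConj {u w : G} (hw : ¬IsConj u w) : classPotential d u w = 0 :=
  dif_neg hw

lemma classPotential_conj (hd : IsGroupRingDerivation d) (hwi : IsWeaklyInnerDerivation d)
    (u s : G) : classPotential d u (s * u * s⁻¹) = conjCharacter d u s := by
  have hw : IsConj u (s * u * s⁻¹) := isConj_iff.mpr ⟨s, rfl⟩
  rw [classPotential, dif_pos hw]
  exact conjCharacter_eq_of_conj_eq hd hwi (isConj_iff.mp hw).choose_spec

lemma conjCharacter_eq_classPotential_sub (hd : IsGroupRingDerivation d)
    (hwi : IsWeaklyInnerDerivation d) {u t : G} (ht : IsConj u t) (v : G) :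
    conjCharacter d t v = classPotential d u (v * t * v⁻¹) - classPotential d u t := by
  obtain ⟨s, rfl⟩ := isConj_iff.mp ht
  rw [show v * (s * u * s⁻¹) * v⁻¹ = (v * s) * u * (v * s)⁻¹ by group,
    classPotential_conj hd hwi, classPotential_conj hd hwi, hd.conjCharacter_mul]
  ring

lemma coeff_of_eq_classPotential_sub (hd : IsGroupRingDerivation d)
    (hwi : IsWeaklyInnerDerivation d) {u : G}
    (hsupp : ∀ v h : G, (d (of A G v)).coeff h ≠ 0 → v⁻¹ * h ∈ conjugatesOf u) (g h : G) :
    (d (of A G g)).coeff h = classPotential d u (h * g⁻¹) - classPotential d u (g⁻¹ * h) := by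
  by_cases ht : IsConj u (g⁻¹ * h)
  · have := conjCharacter_eq_classPotential_sub hd hwi ht g
    rwa [conjCharacter, mul_inv_cancel_left] at this
  · have hconj : ¬IsConj u (h * g⁻¹) := fun h' =>
      ht (h'.trans (isConj_iff.mpr ⟨g⁻¹, by group⟩))
    rw [classPotential_of_not_isConj ht, classPotential_of_not_isConj hconj, sub_zero]
    exact not_not.mp (mt (hsupp g h) ht)

lemma support_classPotential_subset (u : G) :
    Function.support (classPotential d u) ⊆ conjugatesOf u :=
  fun _ hw => not_not.mp (mt classPotential_of_not_isConj hw)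

end Character

/-- A weakly inner derivation whose character is supported on a finite conjugacy class
`[u]` is inner, via an element supported on `[u]`. -/
theorem weakly_inner_supported_on_finite_class_is_inner
    (A G : Type) [CommRing A] [Group G] (u : G)
    (hu : (conjugatesOf u).Finite)
    (d : MonoidAlgebra A G →ₗ[A] MonoidAlgebra A G)
    (hd : IsGroupRingDerivation d) (hwi : IsWeaklyInnerDerivation d)
    (hsupp : ∀ v h : G, (d (MonoidAlgebra.of A G v)).coeff h ≠ 0 → v⁻¹ * h ∈ conjugatesOf u) :
    ∃ a : MonoidAlgebra A G,
      (∀ x : G, x ∉ conjugatesOf u → a.coeff x = 0) ∧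
        ∀ x : MonoidAlgebra A G, d x = a * x - x * a := by
  let a : MonoidAlgebra A G := ofCoeff <|
    Finsupp.ofSupportFinite _ (hu.subset (support_classPotential_subset (d := d) u))
  have ha : ∀ x, a.coeff x = classPotential d u x := fun _ => rfl
  refine ⟨a, fun x hx => (ha x).trans (classPotential_of_not_isConj hx), fun x => ?_⟩
  have hinner : d = LinearMap.mulLeft A a - LinearMap.mulRight A a :=
    linearMap_ext_of fun g => by
      ext h
      simp only [LinearMap.sub_apply, LinearMap.mulLeft_apply, LinearMap.mulRight_apply,
        coeff_mul_of_sub_of_mul, ha, coeff_of_eq_classPotential_sub hd hwi hsupp]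
  rw [hinner]
  rfl
end
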